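/- arXiv:2307.11373 — 4 statements merged into one kernel-verified Lean document; each statement's English description precedes it below -/
import Mathlib

section
/- Gibbs variational principle (Fenchel conjugate of the KL divergence): let S be a finite nonempty type, let q be a probability mass function on S with q(s) > 0 for all s, and let y : S → ℝ. Then the supremum over all probability mass functions p on S of Σ_s p(s)·y(s) − D_KL(p‖q) equals log( Σ_s q(s)·exp(y(s)) ). -/
open Real Finset

/-- Key upper bound: for any pmf `p`, the Gibbs functional is at most `log Z`. -/
lemma gibbs_upper {S : Type*} [Fintype S] [Nonempty S]
    (q : S → ℝ) (hq0 : ∀ s, 0 < q s)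
    (y : S → ℝ) (p : S → ℝ) (hp0 : ∀ s, 0 ≤ p s) (hp1 : ∑ s : S, p s = 1) :
    (∑ s : S, p s * y s) - ∑ s : S, p s * Real.log (p s / q s)
      ≤ Real.log (∑ s : S, q s * Real.exp (y s)) := by
  set Z : ℝ := ∑ s : S, q s * Real.exp (y s) with hZ
  have hZpos : 0 < Z := Finset.sum_pos (fun s _ => mul_pos (hq0 s) (Real.exp_pos _))
    Finset.univ_nonempty
  have key : ∀ s : S, p s * y s - p s * Real.log (p s / q s) - p s * Real.log Z
      ≤ q s * Real.exp (y s) / Z - p s := by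
    intro s
    rcases eq_or_lt_of_le (hp0 s) with h0 | hpos
    · simp [← h0]
      exact div_nonneg (mul_nonneg (hq0 s).le (Real.exp_pos _).le) hZpos.le
    · have hterm : p s * y s - p s * Real.log (p s / q s) - p s * Real.log Z
          = p s * Real.log (q s * Real.exp (y s) / (p s * Z)) := by
        rw [Real.log_div hpos.ne' (hq0 s).ne',
          Real.log_div (mul_pos (hq0 s) (Real.exp_pos _)).ne' (mul_pos hpos hZpos).ne',
          Real.log_mul (hq0 s).ne' (Real.exp_ne_zero _),
          Real.log_mul hpos.ne' hZpos.ne', Real.log_exp]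
        ring
      rw [hterm]
      have hlog := Real.log_le_sub_one_of_pos
        (show 0 < q s * Real.exp (y s) / (p s * Z) from
          div_pos (mul_pos (hq0 s) (Real.exp_pos _)) (mul_pos hpos hZpos))
      calc p s * Real.log (q s * Real.exp (y s) / (p s * Z))
          ≤ p s * (q s * Real.exp (y s) / (p s * Z) - 1) :=
            mul_le_mul_of_nonneg_left hlog (hp0 s)
        _ = q s * Real.exp (y s) / Z - p s := by
            field_simp
  have hsum := Finset.sum_le_sum (fun s (_ : s ∈ Finset.univ) => key s)
  have h1 : ∑ s : S, (p s * y s - p s * Real.log (p s / q s) - p s * Real.log Z)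
      = (∑ s : S, p s * y s) - (∑ s : S, p s * Real.log (p s / q s)) - Real.log Z := by
    rw [Finset.sum_sub_distrib, Finset.sum_sub_distrib, ← Finset.sum_mul, hp1, one_mul]
  have h2 : ∑ s : S, (q s * Real.exp (y s) / Z - p s) = 0 := by
    rw [Finset.sum_sub_distrib, ← Finset.sum_div, ← hZ, div_self (ne_of_gt hZpos), hp1,
      sub_self]
  rw [h1, h2] at hsum
  linarith

/-- Gibbs variational principle (Fenchel conjugate of the KL divergence):
`sup_p ⟨p, y⟩ − D_KL(p‖q) = log Σ_s q(s) exp(y(s))`. -/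
theorem gibbs_variational_principle
    {S : Type*} [Fintype S] [Nonempty S]
    (q : S → ℝ) (hq0 : ∀ s, 0 < q s) (hq1 : ∑ s : S, q s = 1)
    (y : S → ℝ) :
    sSup {v : ℝ | ∃ p : S → ℝ, (∀ s, 0 ≤ p s) ∧ (∑ s : S, p s = 1) ∧
        v = (∑ s : S, p s * y s) - ∑ s : S, p s * Real.log (p s / q s)}
      = Real.log (∑ s : S, q s * Real.exp (y s)) := by
  set Z : ℝ := ∑ s : S, q s * Real.exp (y s) with hZ
  have hZpos : 0 < Z := Finset.sum_pos (fun s _ => mul_pos (hq0 s) (Real.exp_pos _))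
    Finset.univ_nonempty
  set pstar : S → ℝ := fun s => q s * Real.exp (y s) / Z with hpstar
  have hps0 : ∀ s, 0 ≤ pstar s := fun s =>
    div_nonneg (mul_nonneg (hq0 s).le (Real.exp_pos _).le) hZpos.le
  have hps1 : ∑ s : S, pstar s = 1 := by
    simp only [hpstar]
    rw [← Finset.sum_div, ← hZ, div_self (ne_of_gt hZpos)]
  have hval : (∑ s : S, pstar s * y s) - ∑ s : S, pstar s * Real.log (pstar s / q s)
      = Real.log Z := by
    have : ∀ s : S, pstar s * Real.log (pstar s / q s) = pstar s * y s - pstar s * Real.log Z := by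
      intro s
      have : pstar s / q s = Real.exp (y s) / Z := by
        simp only [hpstar]
        rw [div_div, mul_comm Z (q s), mul_div_mul_left _ _ (hq0 s).ne']
      rw [this, Real.log_div (Real.exp_ne_zero _) (ne_of_gt hZpos), Real.log_exp]
      ring
    rw [Finset.sum_congr rfl (fun s _ => this s), Finset.sum_sub_distrib, ← Finset.sum_mul,
      hps1, one_mul]
    ring
  apply le_antisymm
  · refine csSup_le ⟨Real.log Z, pstar, hps0, hps1, hval.symm⟩ ?_
    rintro v ⟨p, hp0, hp1, rfl⟩
    exact gibbs_upper q hq0 y p hp0 hp1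
  · apply le_csSup
    · exact ⟨Real.log Z, fun v ⟨p, hp0, hp1, hv⟩ => hv ▸ gibbs_upper q hq0 y p hp0 hp1⟩
    · exact ⟨pstar, hps0, hps1, hval.symm⟩
end

section
/- Optimal Bayesian discriminator: let S be a finite nonempty type and let d_E and d_O be probability mass functions on S with d_E(s) > 0 and d_O(s) > 0 for all s. Define the discriminator objective J(c) = Σ_s d_E(s)·log c(s) + Σ_s d_O(s)·log(1 − c(s)) for functions c : S → ℝ with 0 < c(s) < 1 for all s. Then the function c*(s) = d_E(s) / ( d_E(s) + d_O(s) ) satisfies 0 < c*(s) < 1 for all s and J(c*) ≥ J(c) for every c : S → ℝ with 0 < c(s) < 1 for all s. -/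
/-!
The objective splits into a sum over `s` of `a log c + b log (1 - c)` with `a = d_E(s)`,
`b = d_O(s)`, so it suffices to maximise each summand separately. After dividing by `a + b`,
this is Gibbs' inequality for the two-point distributions `(w, 1 - w)` and `(c, 1 - c)` with
`w = a / (a + b)`, which follows from `log x ≤ x - 1`.
-/

open Real Finset

lemma mul_log_sub_mul_log_le {p q : ℝ} (hp : 0 < p) (hq : 0 < q) :
    p * log q - p * log p ≤ q - p := by
  have h := log_le_sub_one_of_pos (div_pos hq hp)
  rw [log_div hq.ne' hp.ne'] at h
  calc p * log q - p * log p = p * (log q - log p) := by ring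
    _ ≤ p * (q / p - 1) := mul_le_mul_of_nonneg_left h hp.le
    _ = q - p := by field_simp

lemma mul_log_add_one_sub_mul_log_one_sub_le {w c : ℝ} (hw0 : 0 < w) (hw1 : w < 1)
    (hc0 : 0 < c) (hc1 : c < 1) :
    w * log c + (1 - w) * log (1 - c) ≤ w * log w + (1 - w) * log (1 - w) := by
  linarith [mul_log_sub_mul_log_le hw0 hc0,
    mul_log_sub_mul_log_le (sub_pos.2 hw1) (sub_pos.2 hc1)]

lemma mul_log_add_mul_log_one_sub_le {a b c : ℝ} (ha : 0 < a) (hb : 0 < b)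
    (hc0 : 0 < c) (hc1 : c < 1) :
    a * log c + b * log (1 - c) ≤ a * log (a / (a + b)) + b * log (1 - a / (a + b)) := by
  have hab : 0 < a + b := by linarith
  set w := a / (a + b)
  have hw0 : 0 < w := div_pos ha hab
  have hw1 : w < 1 := (div_lt_one hab).2 (by linarith)
  have ha' : a = (a + b) * w := (mul_div_cancel₀ a hab.ne').symm
  have hb' : b = (a + b) * (1 - w) := by linear_combination -ha'
  calc a * log c + b * log (1 - c) = (a + b) * (w * log c + (1 - w) * log (1 - c)) := by
        linear_combination log c * ha' + log (1 - c) * hb'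
    _ ≤ (a + b) * (w * log w + (1 - w) * log (1 - w)) :=
        mul_le_mul_of_nonneg_left (mul_log_add_one_sub_mul_log_one_sub_le hw0 hw1 hc0 hc1) hab.le
    _ = a * log w + b * log (1 - w) := by
        linear_combination -(log w * ha') - log (1 - w) * hb'

theorem optimal_bayesian_discriminator_general
    {S : Type*} [Fintype S]
    (dE dO : S → ℝ)
    (hE0 : ∀ s, 0 < dE s)
    (hO0 : ∀ s, 0 < dO s)
    (cstar : S → ℝ) (hcstar : ∀ s, cstar s = dE s / (dE s + dO s)) :
    (∀ s, 0 < cstar s ∧ cstar s < 1) ∧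
    (∀ c : S → ℝ, (∀ s, 0 < c s ∧ c s < 1) →
      (∑ s : S, dE s * Real.log (c s)) + (∑ s : S, dO s * Real.log (1 - c s))
        ≤ (∑ s : S, dE s * Real.log (cstar s)) +
            (∑ s : S, dO s * Real.log (1 - cstar s))) := by
  refine ⟨fun s => ?_, fun c hc => ?_⟩
  · have hsum : 0 < dE s + dO s := add_pos (hE0 s) (hO0 s)
    rw [hcstar s]
    exact ⟨div_pos (hE0 s) hsum, (div_lt_one hsum).2 (lt_add_of_pos_right _ (hO0 s))⟩
  · rw [← sum_add_distrib, ← sum_add_distrib]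
    refine sum_le_sum fun s _ => ?_
    rw [hcstar s]
    exact mul_log_add_mul_log_one_sub_le (hE0 s) (hO0 s) (hc s).1 (hc s).2

/-- Optimal Bayesian discriminator: `c*(s) = d_E(s)/(d_E(s)+d_O(s))` maximizes the
logistic discrimination objective over all `c` with values in `(0,1)`. -/
theorem optimal_bayesian_discriminator
    {S : Type*} [Fintype S] [Nonempty S]
    (dE dO : S → ℝ)
    (hE0 : ∀ s, 0 < dE s) (hE1 : ∑ s : S, dE s = 1)
    (hO0 : ∀ s, 0 < dO s) (hO1 : ∑ s : S, dO s = 1)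
    (cstar : S → ℝ) (hcstar : ∀ s, cstar s = dE s / (dE s + dO s)) :
    (∀ s, 0 < cstar s ∧ cstar s < 1) ∧
    (∀ c : S → ℝ, (∀ s, 0 < c s ∧ c s < 1) →
      (∑ s : S, dE s * Real.log (c s)) + (∑ s : S, dO s * Real.log (1 - c s))
        ≤ (∑ s : S, dE s * Real.log (cstar s)) +
            (∑ s : S, dO s * Real.log (1 - cstar s))) :=
  optimal_bayesian_discriminator_general dE dO hE0 hO0 cstar hcstar
end

section
/- KL upper bound via joint occupancies: let S and A be finite nonempty types, let d_z and d_O be probability mass functions on S × A with d_O(s,a) > 0 for all (s,a), and let d_E be a probability mass function on S with d_E(s) > 0 for all s. Write d_z(s) = Σ_a d_z(s,a) and d_O(s) = Σ_a d_O(s,a) for the state marginals. Then D_KL( d_z(S) ‖ d_E ) ≤ Σ_s d_z(s) · log( d_O(s) / d_E(s) ) + D_KL( d_z(S,A) ‖ d_O(S,A) ), where the first KL divergence is between the state marginal of d_z and d_E, and the second is between the joint distributions on S × A. -/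
open Real Finset

/-- Log-sum inequality: `(Σa) log((Σa)/(Σb)) ≤ Σ aᵢ log(aᵢ/bᵢ)`. -/
lemma log_sum_ineq {ι : Type*} [Fintype ι] [Nonempty ι] (a b : ι → ℝ)
    (ha : ∀ i, 0 ≤ a i) (hb : ∀ i, 0 < b i) :
    (∑ i, a i) * Real.log ((∑ i, a i) / (∑ i, b i)) ≤
      ∑ i, a i * Real.log (a i / b i) := by
  set A := ∑ i, a i with hA
  set B := ∑ i, b i with hB
  have hBpos : 0 < B := Finset.sum_pos (fun i _ => hb i) Finset.univ_nonempty
  rcases eq_or_lt_of_le (Finset.sum_nonneg (fun i _ => ha i) : (0:ℝ) ≤ A) with h0 | hApos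
  · have hall : ∀ i, a i = 0 := by
      intro i
      have := (Finset.sum_eq_zero_iff_of_nonneg (fun i _ => ha i)).mp h0.symm
      exact this i (Finset.mem_univ i)
    have hA0 : A = 0 := h0.symm
    rw [hA0]
    simp [hall]
  · have key : ∀ i, a i - A * b i / B ≤ a i * Real.log (a i / b i) - a i * Real.log (A / B) := by
      intro i
      rcases eq_or_lt_of_le (ha i) with h0 | hai
      · rw [← h0]
        simp only [zero_mul, zero_sub, sub_zero, zero_sub, neg_nonpos]
        have : 0 ≤ A * b i / B := div_nonneg (mul_nonneg hApos.le (hb i).le) hBpos.le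
        linarith
      · have hx : 0 < a i * B / (b i * A) := div_pos (mul_pos hai hBpos) (mul_pos (hb i) hApos)
        have hxinv : 0 < b i * A / (a i * B) := div_pos (mul_pos (hb i) hApos) (mul_pos hai hBpos)
        have hlog : 1 - (b i * A) / (a i * B) ≤ Real.log (a i * B / (b i * A)) := by
          have h1 := Real.log_le_sub_one_of_pos hxinv
          have h2 : Real.log (b i * A / (a i * B)) = - Real.log (a i * B / (b i * A)) := by
            rw [← Real.log_inv, inv_div]
          rw [h2] at h1
          linarith
        have heq : Real.log (a i * B / (b i * A)) =
            Real.log (a i / b i) - Real.log (A / B) := by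
          rw [Real.log_div (ne_of_gt (mul_pos hai hBpos)) (ne_of_gt (mul_pos (hb i) hApos)),
            Real.log_mul (ne_of_gt hai) (ne_of_gt hBpos),
            Real.log_mul (ne_of_gt (hb i)) (ne_of_gt hApos),
            Real.log_div (ne_of_gt hai) (ne_of_gt (hb i)),
            Real.log_div (ne_of_gt hApos) (ne_of_gt hBpos)]
          ring
        rw [heq] at hlog
        have hm := mul_le_mul_of_nonneg_left hlog (le_of_lt hai)
        have harith : a i * (1 - (b i * A) / (a i * B)) = a i - A * b i / B := by
          field_simp
        rw [harith] at hm
        linarith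
    have hsum : ∑ i, (a i - A * b i / B) ≤
        ∑ i, (a i * Real.log (a i / b i) - a i * Real.log (A / B)) :=
      Finset.sum_le_sum (fun i _ => key i)
    have hl : ∑ i, (a i - A * b i / B) = 0 := by
      rw [Finset.sum_sub_distrib]
      have : ∑ i, A * b i / B = A := by
        rw [← Finset.sum_div, ← Finset.mul_sum, ← hB, mul_div_assoc,
          div_self (ne_of_gt hBpos), mul_one]
      rw [this, ← hA, sub_self]
    have hr : ∑ i, (a i * Real.log (a i / b i) - a i * Real.log (A / B)) =
        (∑ i, a i * Real.log (a i / b i)) - A * Real.log (A / B) := by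
      rw [Finset.sum_sub_distrib, ← Finset.sum_mul, ← hA]
    rw [hl, hr] at hsum
    linarith

/-- KL upper bound via joint occupancies (SMODICE, Theorem 3 of Ma et al.):
`D_KL(d_z(S) ‖ d_E) ≤ Σ_s d_z(s) log(d_O(s)/d_E(s)) + D_KL(d_z(S,A) ‖ d_O(S,A))`. -/
theorem kl_upper_bound_via_joint
    {S A : Type*} [Fintype S] [Fintype A] [Nonempty S] [Nonempty A]
    (dz dO : S × A → ℝ)
    (hz0 : ∀ p, 0 ≤ dz p) (hz1 : ∑ p : S × A, dz p = 1)
    (hO0 : ∀ p, 0 < dO p) (hO1 : ∑ p : S × A, dO p = 1)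
    (dE : S → ℝ) (hE0 : ∀ s, 0 < dE s) (hE1 : ∑ s : S, dE s = 1) :
    (∑ s : S, (∑ a : A, dz (s, a)) *
        Real.log ((∑ a : A, dz (s, a)) / dE s))
      ≤ (∑ s : S, (∑ a : A, dz (s, a)) *
            Real.log ((∑ a : A, dO (s, a)) / dE s))
        + ∑ p : S × A, dz p * Real.log (dz p / dO p) := by
  have hjoint : ∑ p : S × A, dz p * Real.log (dz p / dO p)
      = ∑ s : S, ∑ a : A, dz (s, a) * Real.log (dz (s, a) / dO (s, a)) := by
    rw [← Finset.sum_product']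
    rfl
  rw [hjoint, ← Finset.sum_add_distrib]
  apply Finset.sum_le_sum
  intro s _
  have hls := log_sum_ineq (fun a => dz (s, a)) (fun a => dO (s, a))
    (fun a => hz0 _) (fun a => hO0 _)
  set zs := ∑ a : A, dz (s, a) with hzs
  set os := ∑ a : A, dO (s, a) with hos
  have hospos : 0 < os := Finset.sum_pos (fun a _ => hO0 _) Finset.univ_nonempty
  have hzsnn : 0 ≤ zs := Finset.sum_nonneg (fun a _ => hz0 _)
  rcases eq_or_lt_of_le hzsnn with h0 | hzspos
  · rw [← h0]
    simp only [zero_mul, zero_add]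
    calc (0:ℝ) = 0 * Real.log (0 / os) := by ring
    _ ≤ _ := by rw [h0]; exact hls
  · have hsplit : Real.log (zs / dE s) = Real.log (os / dE s) + Real.log (zs / os) := by
      rw [Real.log_div (ne_of_gt hzspos) (ne_of_gt (hE0 s)),
        Real.log_div (ne_of_gt hospos) (ne_of_gt (hE0 s)),
        Real.log_div (ne_of_gt hzspos) (ne_of_gt hospos)]
      ring
    rw [hsplit, mul_add]
    linarith [hls]
end

section
/- Strong duality for KL-regularized occupancy optimization: let S and A be finite nonempty types, let P be a transition kernel on S × A, let ρ₀ be a probability mass function on S, let 0 < γ < 1, let R : S × A → ℝ, and let d_O be a probability mass function on S × A with d_O(s,a) > 0 for all (s,a). Let F be the set of nonnegative functions d : S × A → ℝ satisfying the Bellman flow constraints Σ_a d(s,a) = (1−γ)·ρ₀(s) + γ·Σ_{(s',a')} P(s|s',a')·d(s',a') for every s (every such d is a probability mass function). Assume strict feasibility: there exists d ∈ F with d(s,a) > 0 for all (s,a). Then the primal optimal value equals the dual optimal value: sup over d ∈ F of [ Σ_{(s,a)} d(s,a)·R(s,a) − D_KL(d ‖ d_O) ] = inf over V : S → ℝ of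 [ (1−γ)·Σ_s ρ₀(s)·V(s) + log( Σ_{(s,a)} d_O(s,a)·exp( R(s,a) + γ·Σ_{s'} P(s'|s,a)·V(s') − V(s) ) ) ]. -/
/-!
Weak duality is Gibbs' variational inequality `∑ d f - KL(d ‖ q) ≤ log ∑ q exp f`, applied to the
soft advantage `f = R + γ PV - V` once the flow constraints have turned `∑ d (V - γ PV)` into
`(1 - γ) ∑ ρ₀ V`. The dual objective is continuous and invariant under adding constants to `V`,
and a strictly positive feasible occupancy bounds its sublevel sets modulo constants, so it attains
its minimum. At a minimizer `V` the vanishing of every directional derivative says exactly that the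
Gibbs distribution `dO · exp (softAdvantage V) / Z` satisfies the flow constraints, and for this
distribution Gibbs' inequality is an equality.
-/

open Real Finset

section Gibbs

variable {X : Type*} [Fintype X]

lemma mul_sub_mul_log_div_le {d q : ℝ} (hd : 0 ≤ d) (hq : 0 < q) (u : ℝ) :
    d * u - d * log (d / q) ≤ q * exp u - d := by
  rcases hd.eq_or_lt with rfl | hd
  · simpa using (mul_pos hq (exp_pos u)).le
  have h := mul_le_mul_of_nonneg_left (add_one_le_exp (u - log (d / q))) hd.le
  rw [exp_sub, exp_log (div_pos hd hq), div_div_eq_mul_div, mul_div_cancel₀ _ hd.ne',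
    mul_add, mul_sub, mul_one] at h
  linarith [mul_comm q (exp u)]

lemma sum_mul_exp_pos [Nonempty X] {q : X → ℝ} (hq : ∀ x, 0 < q x) (f : X → ℝ) :
    0 < ∑ x, q x * exp (f x) :=
  Finset.sum_pos (fun x _ => mul_pos (hq x) (exp_pos _)) univ_nonempty

lemma log_le_log_sum_mul_exp {q : X → ℝ} (hq : ∀ x, 0 < q x) (f : X → ℝ) (x : X) :
    log (q x) + f x ≤ log (∑ y, q y * exp (f y)) := by
  have : Nonempty X := ⟨x⟩
  rw [← log_exp (f x), ← log_mul (hq x).ne' (exp_pos _).ne']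
  exact log_le_log (mul_pos (hq x) (exp_pos _))
    (single_le_sum (fun y _ => (mul_pos (hq y) (exp_pos _)).le) (mem_univ x))

noncomputable def gibbs (q f : X → ℝ) (x : X) : ℝ :=
  q x * exp (f x) / ∑ y, q y * exp (f y)

lemma gibbs_nonneg [Nonempty X] {q : X → ℝ} (hq : ∀ x, 0 < q x) (f : X → ℝ) (x : X) :
    0 ≤ gibbs q f x :=
  div_nonneg (mul_pos (hq x) (exp_pos _)).le (sum_mul_exp_pos hq f).le

lemma sum_gibbs [Nonempty X] {q : X → ℝ} (hq : ∀ x, 0 < q x) (f : X → ℝ) :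
    ∑ x, gibbs q f x = 1 := by
  simp only [gibbs, ← sum_div, div_self (sum_mul_exp_pos hq f).ne']

lemma sum_mul_sub_sum_mul_log_div_le [Nonempty X] {d q : X → ℝ} (hd : ∀ x, 0 ≤ d x)
    (hd1 : ∑ x, d x = 1) (hq : ∀ x, 0 < q x) (f : X → ℝ) :
    ∑ x, d x * f x - ∑ x, d x * log (d x / q x) ≤ log (∑ x, q x * exp (f x)) := by
  have hZ := sum_mul_exp_pos hq f
  have h := sum_le_sum fun x (_ : x ∈ univ) =>
    mul_sub_mul_log_div_le (hd x) (hq x) (f x - log (∑ y, q y * exp (f y)))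
  simp only [exp_sub, exp_log hZ, mul_sub, sum_sub_distrib, ← sum_mul, hd1, ← mul_div_assoc,
    ← sum_div, div_self hZ.ne'] at h
  linarith

lemma sum_gibbs_mul_sub_sum_gibbs_mul_log_div [Nonempty X] {q : X → ℝ} (hq : ∀ x, 0 < q x)
    (f : X → ℝ) :
    ∑ x, gibbs q f x * f x - ∑ x, gibbs q f x * log (gibbs q f x / q x)
      = log (∑ x, q x * exp (f x)) := by
  have hlog : ∀ x, log (gibbs q f x / q x) = f x - log (∑ y, q y * exp (f y)) := fun x => by
    have : gibbs q f x / q x = exp (f x) / ∑ y, q y * exp (f y) := by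
      rw [gibbs]; field_simp [(hq x).ne']
    rw [this, log_div (exp_pos _).ne' (sum_mul_exp_pos hq f).ne', log_exp]
  simp only [hlog, mul_sub, sum_sub_distrib, ← sum_mul, sum_gibbs hq, one_mul, sub_sub_cancel]

lemma hasDerivAt_log_sum_mul_exp [Nonempty X] {q : X → ℝ} (hq : ∀ x, 0 < q x) (f b : X → ℝ) :
    HasDerivAt (fun t => log (∑ x, q x * exp (f x + t * b x))) (∑ x, gibbs q f x * b x) 0 := by
  have hsum : HasDerivAt (fun t => ∑ x, q x * exp (f x + t * b x))
      (∑ x, q x * exp (f x) * b x) 0 := by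
    refine HasDerivAt.fun_sum fun x _ => ?_
    simpa [mul_assoc] using
      (((hasDerivAt_id (0 : ℝ)).mul_const (b x)).const_add (f x)).exp.const_mul (q x)
  convert hsum.log (by simpa using (sum_mul_exp_pos hq f).ne') using 1
  simp only [gibbs, zero_mul, add_zero, sum_div]
  exact sum_congr rfl fun x _ => by ring

end Gibbs

lemma abs_mul_le_of_sum_mul_eq_zero {X : Type*} [Fintype X] {w y : X → ℝ} {C : ℝ}
    (hw : ∀ x, 0 ≤ w x) (hw1 : ∑ x, w x = 1) (hy : ∀ x, y x ≤ C) (h0 : ∑ x, w x * y x = 0)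
    (x : X) : |w x * y x| ≤ C := by
  classical
  have hwC : ∀ s : Finset X, ∑ x ∈ s, w x * y x ≤ (∑ x ∈ s, w x) * C := fun s => by
    rw [sum_mul]; exact sum_le_sum fun x _ => mul_le_mul_of_nonneg_left (hy x) (hw x)
  have hC : 0 ≤ C := by simpa [h0, hw1] using hwC univ
  have hwx : w x ≤ 1 := hw1 ▸ single_le_sum (fun x _ => hw x) (mem_univ x)
  have hrest : ∑ x ∈ univ.erase x, w x ≤ 1 :=
    hw1 ▸ sum_le_sum_of_subset_of_nonneg (erase_subset _ _) fun x _ _ => hw x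
  have hsplit := add_sum_erase univ (fun x => w x * y x) (mem_univ x)
  rw [h0] at hsplit
  rw [abs_le]
  constructor <;> nlinarith [hwC (univ.erase x), hy x, hw x]

section Occupancy

variable {S A : Type*} [Fintype S]

def softAdvantage (P : S × A → S → ℝ) (γ : ℝ) (R : S × A → ℝ) (V : S → ℝ) (p : S × A) : ℝ :=
  R p + γ * (∑ s', P p s' * V s') - V p.1

lemma softAdvantage_add_smul {P : S × A → S → ℝ} {γ : ℝ} (R : S × A → ℝ) (V h : S → ℝ) (t : ℝ)
    (p : S × A) :
    softAdvantage P γ R (V + t • h) p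
      = softAdvantage P γ R V p + t * (γ * ∑ s', P p s' * h s' - h p.1) := by
  simp only [softAdvantage, Pi.add_apply, Pi.smul_apply, smul_eq_mul, mul_add, sum_add_distrib,
    mul_left_comm _ t, ← mul_sum]
  ring

lemma one_sub_mul_sub_le_of_forall_abs_le [Nonempty A] {P : S × A → S → ℝ} {γ : ℝ}
    (hP0 : ∀ p s', 0 ≤ P p s') (hP1 : ∀ p, ∑ s', P p s' = 1) (hγ0 : 0 ≤ γ) (hγ1 : γ ≤ 1)
    {V : S → ℝ} {c L : ℝ}
    (h : ∀ p : S × A, |γ * ∑ s', P p s' * V s' - V p.1 + c| ≤ L) (s s' : S) :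
    (1 - γ) * (V s - V s') ≤ 2 * L := by
  obtain ⟨a⟩ := ‹Nonempty A›
  have : Nonempty S := ⟨s⟩
  obtain ⟨smax, hmax⟩ := Finite.exists_max V
  obtain ⟨smin, hmin⟩ := Finite.exists_min V
  have hPV : ∀ p, V smin ≤ ∑ s', P p s' * V s' ∧ ∑ s', P p s' * V s' ≤ V smax := fun p => by
    constructor
    · calc V smin = ∑ s', P p s' * V smin := by rw [← sum_mul, hP1, one_mul]
        _ ≤ _ := sum_le_sum fun s' _ => mul_le_mul_of_nonneg_left (hmin s') (hP0 p s')
    · calc _ ≤ ∑ s', P p s' * V smax :=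
            sum_le_sum fun s' _ => mul_le_mul_of_nonneg_left (hmax s') (hP0 p s')
        _ = V smax := by rw [← sum_mul, hP1, one_mul]
  have h1 := (abs_le.1 (h (smax, a))).1
  have h2 := (abs_le.1 (h (smin, a))).2
  nlinarith [hPV (smax, a), hPV (smin, a), hmax s, hmin s']

variable [Fintype A]

def IsBellmanFlow (P : S × A → S → ℝ) (ρ₀ : S → ℝ) (γ : ℝ) (d : S × A → ℝ) : Prop :=
  ∀ s, ∑ a, d (s, a) = (1 - γ) * ρ₀ s + γ * ∑ p, P p s * d p

noncomputable def klDual (P : S × A → S → ℝ) (ρ₀ : S → ℝ) (γ : ℝ) (R dO : S × A → ℝ)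
    (V : S → ℝ) : ℝ :=
  (1 - γ) * (∑ s, ρ₀ s * V s) + log (∑ p, dO p * exp (softAdvantage P γ R V p))

variable {P : S × A → S → ℝ} {ρ₀ : S → ℝ} {γ : ℝ}

lemma sum_mul_bellman_adjoint (d : S × A → ℝ) (V : S → ℝ) :
    ∑ p, d p * (V p.1 - γ * ∑ s', P p s' * V s')
      = ∑ s, V s * (∑ a, d (s, a) - γ * ∑ p, P p s * d p) := by
  simp only [mul_sub, sum_sub_distrib, mul_sum]
  congr 1
  · exact Fintype.sum_prod_type' (fun s a => d (s, a) * V s) |>.trans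
      (sum_congr rfl fun _ _ => sum_congr rfl fun _ _ => mul_comm _ _)
  · rw [sum_comm]
    exact sum_congr rfl fun _ _ => sum_congr rfl fun _ _ => by ring

lemma isBellmanFlow_iff {d : S × A → ℝ} :
    IsBellmanFlow P ρ₀ γ d ↔
      ∀ V : S → ℝ, ∑ p, d p * (V p.1 - γ * ∑ s', P p s' * V s') = (1 - γ) * ∑ s, ρ₀ s * V s := by
  classical
  simp only [sum_mul_bellman_adjoint]
  refine ⟨fun hd V => ?_, fun h s => ?_⟩
  · rw [mul_sum]
    exact sum_congr rfl fun s _ => by rw [hd s]; ring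
  have hs := h (Pi.single s 1)
  simp only [Pi.single_apply, ite_mul, one_mul, zero_mul, mul_ite, mul_one, mul_zero,
    sum_ite_eq', mem_univ, if_true] at hs
  linarith

lemma IsBellmanFlow.sum_eq_one {d : S × A → ℝ} (hd : IsBellmanFlow P ρ₀ γ d)
    (hP1 : ∀ p, ∑ s', P p s' = 1) (hρ1 : ∑ s, ρ₀ s = 1) (hγ1 : γ ≠ 1) : ∑ p, d p = 1 := by
  have h := isBellmanFlow_iff.1 hd 1
  simp only [Pi.one_apply, mul_one, hP1, hρ1, ← sum_mul] at h
  exact (mul_left_inj' (sub_ne_zero.2 hγ1.symm)).1 (h.trans (one_mul _).symm)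

lemma IsBellmanFlow.sum_mul_eq_sum_mul_softAdvantage_add {d : S × A → ℝ}
    (hd : IsBellmanFlow P ρ₀ γ d) (R : S × A → ℝ) (V : S → ℝ) :
    ∑ p, d p * R p = ∑ p, d p * softAdvantage P γ R V p + (1 - γ) * ∑ s, ρ₀ s * V s := by
  rw [← isBellmanFlow_iff.1 hd V, ← sum_add_distrib]
  exact sum_congr rfl fun p _ => by rw [softAdvantage]; ring

lemma IsBellmanFlow.le_klDual [Nonempty S] [Nonempty A] {d : S × A → ℝ}
    (hd : IsBellmanFlow P ρ₀ γ d) (hd0 : ∀ p, 0 ≤ d p) (hd1 : ∑ p, d p = 1)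
    (R : S × A → ℝ) {dO : S × A → ℝ} (hO : ∀ p, 0 < dO p) (V : S → ℝ) :
    ∑ p, d p * R p - ∑ p, d p * log (d p / dO p) ≤ klDual P ρ₀ γ R dO V := by
  rw [hd.sum_mul_eq_sum_mul_softAdvantage_add R V, klDual]
  linarith [sum_mul_sub_sum_mul_log_div_le hd0 hd1 hO (softAdvantage P γ R V)]

lemma IsBellmanFlow.primal_gibbs_eq_klDual [Nonempty S] [Nonempty A] {R dO : S × A → ℝ}
    (hO : ∀ p, 0 < dO p) {V : S → ℝ}
    (hd : IsBellmanFlow P ρ₀ γ (gibbs dO (softAdvantage P γ R V))) :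
    ∑ p, gibbs dO (softAdvantage P γ R V) p * R p
        - ∑ p, gibbs dO (softAdvantage P γ R V) p
            * log (gibbs dO (softAdvantage P γ R V) p / dO p)
      = klDual P ρ₀ γ R dO V := by
  rw [hd.sum_mul_eq_sum_mul_softAdvantage_add R V, klDual,
    ← sum_gibbs_mul_sub_sum_gibbs_mul_log_div hO]
  ring

lemma klDual_add_smul (R dO : S × A → ℝ) (V h : S → ℝ) (t : ℝ) :
    klDual P ρ₀ γ R dO (V + t • h)
      = (1 - γ) * ∑ s, ρ₀ s * V s + t * ((1 - γ) * ∑ s, ρ₀ s * h s)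
        + log (∑ p, dO p * exp (softAdvantage P γ R V p
            + t * (γ * ∑ s', P p s' * h s' - h p.1))) := by
  simp only [klDual, softAdvantage_add_smul, Pi.add_apply, Pi.smul_apply, smul_eq_mul, mul_add,
    sum_add_distrib, mul_left_comm _ t, ← mul_sum]

lemma klDual_add_const [Nonempty S] [Nonempty A] (hP1 : ∀ p, ∑ s', P p s' = 1)
    (hρ1 : ∑ s, ρ₀ s = 1) (R : S × A → ℝ) {dO : S × A → ℝ} (hO : ∀ p, 0 < dO p)
    (V : S → ℝ) (c : ℝ) :
    klDual P ρ₀ γ R dO (fun s => V s + c) = klDual P ρ₀ γ R dO V := by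
  have hV : (fun s => V s + c) = V + c • 1 := by ext; simp
  simp only [hV, klDual_add_smul, Pi.one_apply, mul_one, hP1, hρ1, exp_add, ← mul_assoc,
    ← sum_mul]
  rw [log_mul (sum_mul_exp_pos hO _).ne' (exp_pos _).ne', log_exp, klDual]
  ring

lemma continuous_klDual [Nonempty S] [Nonempty A] (R : S × A → ℝ) {dO : S × A → ℝ}
    (hO : ∀ p, 0 < dO p) : Continuous (klDual P ρ₀ γ R dO) := by
  unfold klDual softAdvantage
  exact (by fun_prop : Continuous _).add
    ((by fun_prop : Continuous _).log fun V => (sum_mul_exp_pos hO _).ne')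

lemma IsBellmanFlow.exists_sub_le_of_klDual_le [Nonempty S] [Nonempty A] {d : S × A → ℝ}
    (hd : IsBellmanFlow P ρ₀ γ d) (hd0 : ∀ p, 0 < d p) (hd1 : ∑ p, d p = 1)
    (hP0 : ∀ p s', 0 ≤ P p s') (hP1 : ∀ p, ∑ s', P p s' = 1) (hγ0 : 0 ≤ γ) (hγ1 : γ < 1)
    (R : S × A → ℝ) {dO : S × A → ℝ} (hO : ∀ p, 0 < dO p) (M : ℝ) :
    ∃ K, ∀ V, klDual P ρ₀ γ R dO V ≤ M → ∀ s s', V s - V s' ≤ K := by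
  obtain ⟨C, hC⟩ := (Set.finite_range fun p => -log (dO p) - R p).bddAbove
  obtain ⟨p₀, hp₀⟩ := Finite.exists_min d
  refine ⟨2 * ((M + C) / d p₀) / (1 - γ), fun V hV s s' => ?_⟩
  set c := (1 - γ) * ∑ s, ρ₀ s * V s
  -- `γ PV - V + c` is bounded above on a sublevel set and has mean zero under the strictly
  -- positive `d`, hence it is bounded below as well.
  have hy : ∀ p, γ * ∑ s', P p s' * V s' - V p.1 + c ≤ M + C := fun p => by
    have hlog := log_le_log_sum_mul_exp hO (softAdvantage P γ R V) p
    have hCp := hC ⟨p, rfl⟩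
    rw [klDual] at hV
    rw [softAdvantage] at hlog
    linarith
  have h0 : ∑ p, d p * (γ * ∑ s', P p s' * V s' - V p.1 + c) = 0 := by
    have hsplit : ∀ p, d p * (γ * ∑ s', P p s' * V s' - V p.1 + c)
        = d p * c - d p * (V p.1 - γ * ∑ s', P p s' * V s') := fun p => by ring
    rw [sum_congr rfl fun p _ => hsplit p, sum_sub_distrib, ← sum_mul, hd1,
      isBellmanFlow_iff.1 hd V]
    ring
  have hL : ∀ p, |γ * ∑ s', P p s' * V s' - V p.1 + c| ≤ (M + C) / d p₀ := fun p => by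
    have hwy := abs_mul_le_of_sum_mul_eq_zero (fun p => (hd0 p).le) hd1 hy h0 p
    have hMC : 0 ≤ M + C := (abs_nonneg _).trans hwy
    rw [abs_mul, abs_of_pos (hd0 p), mul_comm, ← le_div_iff₀ (hd0 p)] at hwy
    exact hwy.trans (div_le_div_of_nonneg_left hMC (hd0 p₀) (hp₀ p))
  rw [le_div_iff₀ (sub_pos.2 hγ1), mul_comm]
  exact one_sub_mul_sub_le_of_forall_abs_le hP0 hP1 hγ0 hγ1.le hL s s'

lemma IsBellmanFlow.exists_forall_klDual_le [Nonempty S] [Nonempty A] {d : S × A → ℝ}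
    (hd : IsBellmanFlow P ρ₀ γ d) (hd0 : ∀ p, 0 < d p) (hP0 : ∀ p s', 0 ≤ P p s')
    (hP1 : ∀ p, ∑ s', P p s' = 1) (hρ1 : ∑ s, ρ₀ s = 1) (hγ0 : 0 ≤ γ) (hγ1 : γ < 1)
    (R : S × A → ℝ) {dO : S × A → ℝ} (hO : ∀ p, 0 < dO p) :
    ∃ V, ∀ W, klDual P ρ₀ γ R dO V ≤ klDual P ρ₀ γ R dO W := by
  obtain ⟨s₀⟩ := ‹Nonempty S›
  obtain ⟨K, hK⟩ := hd.exists_sub_le_of_klDual_le hd0 (hd.sum_eq_one hP1 hρ1 hγ1.ne) hP0 hP1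
    hγ0 hγ1 R hO (klDual P ρ₀ γ R dO 0)
  let T : Set (S → ℝ) := {V | V s₀ = 0 ∧ klDual P ρ₀ γ R dO V ≤ klDual P ρ₀ γ R dO 0}
  have hT : IsCompact T := by
    refine Metric.isCompact_of_isClosed_isBounded
      ((isClosed_eq (continuous_apply s₀) continuous_const).inter
        (isClosed_le (continuous_klDual R hO) continuous_const))
      ((Metric.isBounded_Icc (fun _ => -K) fun _ => K).subset
        fun V hV => ⟨fun s => ?_, fun s => ?_⟩)
    · linarith [hK V hV.2 s₀ s, hV.1]
    · linarith [hK V hV.2 s s₀, hV.1]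
  obtain ⟨V, hVT, hVmin⟩ :=
    hT.exists_isMinOn ⟨0, rfl, le_rfl⟩ (continuous_klDual R hO).continuousOn
  refine ⟨V, fun W => ?_⟩
  rw [← klDual_add_const hP1 hρ1 R hO W (-W s₀)]
  by_cases hW : klDual P ρ₀ γ R dO (fun s => W s + -W s₀) ≤ klDual P ρ₀ γ R dO 0
  · exact hVmin ⟨by simp, hW⟩
  · exact hVT.2.trans (not_le.1 hW).le

lemma isBellmanFlow_gibbs_of_forall_klDual_le [Nonempty S] [Nonempty A] {R dO : S × A → ℝ}
    (hO : ∀ p, 0 < dO p) {V : S → ℝ} (hV : ∀ W, klDual P ρ₀ γ R dO V ≤ klDual P ρ₀ γ R dO W) :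
    IsBellmanFlow P ρ₀ γ (gibbs dO (softAdvantage P γ R V)) := by
  refine isBellmanFlow_iff.2 fun h => ?_
  have hderiv : HasDerivAt (fun t : ℝ => klDual P ρ₀ γ R dO (V + t • h))
      ((1 - γ) * ∑ s, ρ₀ s * h s + ∑ p, gibbs dO (softAdvantage P γ R V) p
        * (γ * ∑ s', P p s' * h s' - h p.1)) 0 := by
    simp only [klDual_add_smul]
    simpa using (((hasDerivAt_id 0).mul_const _).const_add _).fun_add
      (hasDerivAt_log_sum_mul_exp hO _ _)
  have hmin : IsLocalMin (fun t : ℝ => klDual P ρ₀ γ R dO (V + t • h)) 0 :=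
    Filter.Eventually.of_forall fun t => by simpa using hV (V + t • h)
  have hstat := hmin.hasDerivAt_eq_zero hderiv
  simp only [mul_sub, sum_sub_distrib] at hstat ⊢
  linarith

end Occupancy

theorem kl_regularized_occupancy_strong_duality_general
    {S A : Type*} [Fintype S] [Fintype A] [Nonempty S] [Nonempty A]
    (P : S × A → S → ℝ) (hP0 : ∀ p s', 0 ≤ P p s') (hP1 : ∀ p : S × A, ∑ s' : S, P p s' = 1)
    (ρ₀ : S → ℝ) (hρ1 : ∑ s : S, ρ₀ s = 1)
    (γ : ℝ) (hγ0 : 0 < γ) (hγ1 : γ < 1)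
    (R : S × A → ℝ)
    (dO : S × A → ℝ) (hO0 : ∀ p, 0 < dO p)
    (hfeas : ∃ d : S × A → ℝ, (∀ p, 0 < d p) ∧
      (∀ s : S, ∑ a : A, d (s, a)
          = (1 - γ) * ρ₀ s + γ * ∑ p : S × A, P p s * d p)) :
    sSup {v : ℝ | ∃ d : S × A → ℝ, (∀ p, 0 ≤ d p) ∧
        (∀ s : S, ∑ a : A, d (s, a)
            = (1 - γ) * ρ₀ s + γ * ∑ p : S × A, P p s * d p) ∧
        v = (∑ p : S × A, d p * R p) - ∑ p : S × A, d p * Real.log (d p / dO p)}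
      = sInf {v : ℝ | ∃ V : S → ℝ,
        v = (1 - γ) * (∑ s : S, ρ₀ s * V s)
            + Real.log (∑ p : S × A, dO p *
                Real.exp (R p + γ * (∑ s' : S, P p s' * V s') - V p.1))} := by
  obtain ⟨d, hd0, hd⟩ := hfeas
  obtain ⟨V, hV⟩ := IsBellmanFlow.exists_forall_klDual_le hd hd0 hP0 hP1 hρ1 hγ0.le hγ1 R hO0
  have hgibbs := isBellmanFlow_gibbs_of_forall_klDual_le hO0 hV
  refine (IsGreatest.csSup_eq (a := klDual P ρ₀ γ R dO V) ?_).trans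
    (IsLeast.csInf_eq (a := klDual P ρ₀ γ R dO V) ?_).symm
  · refine ⟨⟨_, gibbs_nonneg hO0 _, hgibbs, (hgibbs.primal_gibbs_eq_klDual hO0).symm⟩, ?_⟩
    rintro _ ⟨d, hd0, hd, rfl⟩
    exact IsBellmanFlow.le_klDual hd hd0 (IsBellmanFlow.sum_eq_one hd hP1 hρ1 hγ1.ne) R hO0 V
  · refine ⟨⟨V, rfl⟩, ?_⟩
    rintro _ ⟨W, rfl⟩
    exact hV W

/-- Strong duality for KL-regularized occupancy optimization: under strict feasibility
of the Bellman flow constraints, the supremum of the KL-regularized expected reward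
over flow-feasible occupancies equals the infimum of the log-sum-exp dual objective
over value functions. -/
theorem kl_regularized_occupancy_strong_duality
    {S A : Type*} [Fintype S] [Fintype A] [Nonempty S] [Nonempty A]
    (P : S × A → S → ℝ) (hP0 : ∀ p s', 0 ≤ P p s') (hP1 : ∀ p : S × A, ∑ s' : S, P p s' = 1)
    (ρ₀ : S → ℝ) (hρ0 : ∀ s, 0 ≤ ρ₀ s) (hρ1 : ∑ s : S, ρ₀ s = 1)
    (γ : ℝ) (hγ0 : 0 < γ) (hγ1 : γ < 1)
    (R : S × A → ℝ)
    (dO : S × A → ℝ) (hO0 : ∀ p, 0 < dO p) (hO1 : ∑ p : S × A, dO p = 1)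
    (hfeas : ∃ d : S × A → ℝ, (∀ p, 0 < d p) ∧
      (∀ s : S, ∑ a : A, d (s, a)
          = (1 - γ) * ρ₀ s + γ * ∑ p : S × A, P p s * d p)) :
    sSup {v : ℝ | ∃ d : S × A → ℝ, (∀ p, 0 ≤ d p) ∧
        (∀ s : S, ∑ a : A, d (s, a)
            = (1 - γ) * ρ₀ s + γ * ∑ p : S × A, P p s * d p) ∧
        v = (∑ p : S × A, d p * R p) - ∑ p : S × A, d p * Real.log (d p / dO p)}
      = sInf {v : ℝ | ∃ V : S → ℝ,
        v = (1 - γ) * (∑ s : S, ρ₀ s * V s)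
            + Real.log (∑ p : S × A, dO p *
                Real.exp (R p + γ * (∑ s' : S, P p s' * V s') - V p.1))} :=
  kl_regularized_occupancy_strong_duality_general P hP0 hP1 ρ₀ hρ1 γ hγ0 hγ1 R dO hO0 hfeas
end
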